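/- The embedding of PRED2₀ into I₀ is sound: if Δ ⊢ φ in PRED2₀ (Δ a set of formulas, φ a formula) then ⟦Δ⟧ ∪ Γ(Δ ∪ {φ}) ⊢ ⟦φ⟧ in I₀. -/

import Mathlib

/-! Infrastructure: type-free λ-terms over a set of constants, βη-conversion,
and the illative systems Iω, Iω^c and I₀ of Barendregt–Bunder–Dekkers style,
following Czajka, "A semantic approach to illative combinatory logic". -/

namespace ICL

/-- Type-free λ-terms over a set `C` of primitive constants (de Bruijn representation). -/
inductive Tm (C : Type) : Type
  | var : Nat → Tm C
  | const : C → Tm C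
  | app : Tm C → Tm C → Tm C
  | lam : Tm C → Tm C

namespace Tm

variable {C : Type}

/-- Renaming of free de Bruijn variables. -/
def rename (f : Nat → Nat) : Tm C → Tm C
  | .var n => .var (f n)
  | .const c => .const c
  | .app a b => .app (a.rename f) (b.rename f)
  | .lam a => .lam (a.rename fun n => match n with | 0 => 0 | m + 1 => f m + 1)

/-- Shift all free variables up by one. -/
def lift (t : Tm C) : Tm C := t.rename (· + 1)

/-- Simultaneous (capture-avoiding) substitution. -/
def bind (σ : Nat → Tm C) : Tm C → Tm C
  | .var n => σ n
  | .const c => .const c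
  | .app a b => .app (a.bind σ) (b.bind σ)
  | .lam a => .lam (a.bind fun n => match n with | 0 => .var 0 | m + 1 => (σ m).lift)

/-- Substitution of `s` for the variable `0` (β-contraction of `(λ.t) s`). -/
def subst0 (t s : Tm C) : Tm C := t.bind fun n => match n with | 0 => s | m + 1 => .var m

/-- The set of free variables of a term. -/
def fvar : Tm C → Set Nat
  | .var n => {n}
  | .const _ => ∅
  | .app a b => fvar a ∪ fvar b
  | .lam a => {n | n + 1 ∈ fvar a}

end Tm

/-- One-step βη-reduction (closed under arbitrary contexts). -/
inductive BetaEta {C : Type} : Tm C → Tm C → Prop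
  | beta (t s : Tm C) : BetaEta (.app (.lam t) s) (t.subst0 s)
  | eta (t : Tm C) : BetaEta (.lam (.app t.lift (.var 0))) t
  | appL {t t' : Tm C} (s : Tm C) : BetaEta t t' → BetaEta (.app t s) (.app t' s)
  | appR (t : Tm C) {s s' : Tm C} : BetaEta s s' → BetaEta (.app t s) (.app t s')
  | lam {t t' : Tm C} : BetaEta t t' → BetaEta (.lam t) (.lam t')

/-- βη-convertibility `=βη`. -/
def Conv {C : Type} : Tm C → Tm C → Prop := Relation.EqvGen BetaEta

/-- The term `Ξ`. -/
def XiT {C : Type} (cXi : C) : Tm C := .const cXi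

/-- The term `L`. -/
def LT {C : Type} (cL : C) : Tm C := .const cL

/-- The term `H = λx. L (K x) = λx. L (λy. x)`. -/
def Hc {C : Type} (cL : C) : Tm C := .lam (.app (.const cL) (.lam (.var 1)))

/-- The term `⊃ = λx y. Ξ (K x) (K y)`. -/
def impC {C : Type} (cXi : C) : Tm C :=
  .lam (.lam (.app (.app (.const cXi) (.lam (.var 2))) (.lam (.var 1))))

/-- `t₁ ⊃ t₂` (infix application of `⊃`). -/
def impTm {C : Type} (cXi : C) (t1 t2 : Tm C) : Tm C := .app (.app (impC cXi) t1) t2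

/-- The term `F = λx y f. Ξ x (λz. y (f z))`. -/
def Fcomb {C : Type} (cXi : C) : Tm C :=
  .lam (.lam (.lam (.app (.app (.const cXi) (.var 2))
    (.lam (.app (.var 2) (.app (.var 1) (.var 0)))))))

/-- The term `⊥ = Ξ H I`, where `I = λx.x`. -/
def botT {C : Type} (cXi cL : C) : Tm C := .app (.app (XiT cXi) (Hc cL)) (.lam (.var 0))

/-- The double-negation axiom term `Ξ H (λx. ((x ⊃ ⊥) ⊃ ⊥) ⊃ x)`. -/
def dnAx {C : Type} (cXi cL : C) : Tm C :=
  .app (.app (XiT cXi) (Hc cL))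
    (.lam (impTm cXi (impTm cXi (impTm cXi (.var 0) (botT cXi cL)) (botT cXi cL)) (.var 0)))

/-- Free variables of a set of terms. -/
def fvS {C : Type} (Γ : Set (Tm C)) : Set Nat := ⋃ t ∈ Γ, t.fvar

/-- The illative derivability judgement `Γ ⊢ t`.  The flag `fl` enables the rule `F_L`
(giving `Iω` when `fl = true`, and `I₀` when `fl = false`); the flag `dn` enables the
double-negation axiom (giving the classical variant `Iω^c`). -/
inductive IDeriv {B C : Type} (cXi cL : C) (cA : B → C) (fl dn : Bool) :
    Set (Tm C) → Tm C → Prop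
  | ax {Γ : Set (Tm C)} {t : Tm C} : t ∈ Γ → IDeriv cXi cL cA fl dn Γ t
  | axLH {Γ : Set (Tm C)} : IDeriv cXi cL cA fl dn Γ (.app (LT cL) (Hc cL))
  | axLA {Γ : Set (Tm C)} (b : B) : IDeriv cXi cL cA fl dn Γ (.app (LT cL) (.const (cA b)))
  | axDN {Γ : Set (Tm C)} : dn = true → IDeriv cXi cL cA fl dn Γ (dnAx cXi cL)
  | eq {Γ : Set (Tm C)} {t1 t2 : Tm C} :
      IDeriv cXi cL cA fl dn Γ t1 → Conv t1 t2 → IDeriv cXi cL cA fl dn Γ t2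
  | hi {Γ : Set (Tm C)} {t : Tm C} :
      IDeriv cXi cL cA fl dn Γ t → IDeriv cXi cL cA fl dn Γ (.app (Hc cL) t)
  | xiE {Γ : Set (Tm C)} {t1 t2 t3 : Tm C} :
      IDeriv cXi cL cA fl dn Γ (.app (.app (XiT cXi) t1) t2) →
      IDeriv cXi cL cA fl dn Γ (.app t1 t3) →
      IDeriv cXi cL cA fl dn Γ (.app t2 t3)
  | xiI {Γ : Set (Tm C)} {t1 t2 : Tm C} (x : Nat) :
      IDeriv cXi cL cA fl dn (insert (.app t1 (.var x)) Γ) (.app t2 (.var x)) →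
      IDeriv cXi cL cA fl dn Γ (.app (LT cL) t1) →
      x ∉ fvS Γ → x ∉ t1.fvar → x ∉ t2.fvar →
      IDeriv cXi cL cA fl dn Γ (.app (.app (XiT cXi) t1) t2)
  | xiH {Γ : Set (Tm C)} {t1 t2 : Tm C} (x : Nat) :
      IDeriv cXi cL cA fl dn (insert (.app t1 (.var x)) Γ) (.app (Hc cL) (.app t2 (.var x))) →
      IDeriv cXi cL cA fl dn Γ (.app (LT cL) t1) →
      x ∉ fvS Γ → x ∉ t1.fvar → x ∉ t2.fvar →
      IDeriv cXi cL cA fl dn Γ (.app (Hc cL) (.app (.app (XiT cXi) t1) t2))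
  | fL {Γ : Set (Tm C)} {t1 t2 : Tm C} (x : Nat) : fl = true →
      IDeriv cXi cL cA fl dn (insert (.app t1 (.var x)) Γ) (.app (LT cL) t2) →
      IDeriv cXi cL cA fl dn Γ (.app (LT cL) t1) →
      x ∉ fvS Γ → x ∉ t1.fvar → x ∉ t2.fvar →
      IDeriv cXi cL cA fl dn Γ (.app (.app (Fcomb cXi) t1) t2)

end ICL


/-! Infrastructure: the system PRED2₀ of first-order many-sorted intuitionistic
predicate logic with second-order propositional quantifiers, and its (simplified)
Kripke semantics, following Czajka, "A semantic approach to illative combinatory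
logic", Section 2. -/

namespace PRED2

/-- Types of PRED2₀ : `τ ::= o | B | B → τ`, for a set `B` of base types. -/
inductive Ty (B : Type) : Type
  | o : Ty B
  | base : B → Ty B
  | arr : B → Ty B → Ty B
deriving DecidableEq

/-- The types over which quantification is allowed: `B ∪ {o}`. -/
def QTy {B : Type} (τ : Ty B) : Prop := τ = .o ∨ ∃ b, τ = .base b

/-- Terms of PRED2₀ over a signature `Con` (with `Con τ` the constants of type `τ`).
Variables of type `τ` are indexed by natural numbers.  Terms of type `.o` are the
formulas. -/
inductive Trm (B : Type) (Con : Ty B → Type) : Ty B → Type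
  | var (τ : Ty B) (n : Nat) : Trm B Con τ
  | con {τ : Ty B} (c : Con τ) : Trm B Con τ
  | app {b : B} {τ : Ty B} (f : Trm B Con (.arr b τ)) (a : Trm B Con (.base b)) : Trm B Con τ
  | imp (φ ψ : Trm B Con .o) : Trm B Con .o
  | all (τ : Ty B) (hτ : QTy τ) (m : Nat) (φ : Trm B Con .o) : Trm B Con .o

variable {B : Type} [DecidableEq B] {Con : Ty B → Type}

/-- Free variables of a term (a variable is a pair of its type and its index). -/
def FV : {τ : Ty B} → Trm B Con τ → Finset (Ty B × Nat)
  | _, .var τ n => {(τ, n)}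
  | _, .con _ => ∅
  | _, .app f a => FV f ∪ FV a
  | _, .imp φ ψ => FV φ ∪ FV ψ
  | _, .all τ _ m φ => (FV φ).erase (τ, m)

/-- Update a (term-valued) valuation at the variable `(τ0, m)`. -/
def vupd (v : ∀ τ : Ty B, Nat → Trm B Con τ) (τ0 : Ty B) (m : Nat) (t : Trm B Con τ0) :
    ∀ τ : Ty B, Nat → Trm B Con τ :=
  fun τ n => if h : τ = τ0 then (if n = m then h.symm ▸ t else v τ n) else v τ n

/-- The identity substitution. -/
def vid : ∀ τ : Ty B, Nat → Trm B Con τ := fun τ n => .var τ n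

/-- A number strictly larger than the index of any variable free in any `v y`
for `y ∈ s`; used to choose fresh names for bound variables. -/
def fresh (v : ∀ τ : Ty B, Nat → Trm B Con τ) (s : Finset (Ty B × Nat)) : Nat :=
  (s.sup fun y => (FV (v y.1 y.2)).sup fun z => z.2) + 1

/-- Simultaneous capture-avoiding substitution: bound variables are renamed to
fresh ones so that no free variable of the substituted terms is captured. -/
def substV (v : ∀ τ : Ty B, Nat → Trm B Con τ) : {τ : Ty B} → Trm B Con τ → Trm B Con τ
  | _, .var τ n => v τ n
  | _, .con c => .con c
  | _, .app f a => .app (substV v f) (substV v a)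
  | _, .imp φ ψ => .imp (substV v φ) (substV v ψ)
  | _, .all τ h m φ =>
      let m' := fresh v ((FV φ).erase (τ, m))
      .all τ h m' (substV (vupd v τ m (.var τ m')) φ)

/-- `φ[x/t]` : capture-avoiding substitution of the term `t` for all free
occurrences of the variable `x = (τ, m)`. -/
def subst1 (τ : Ty B) (m : Nat) (t : Trm B Con τ) {τ' : Ty B} (φ : Trm B Con τ') :
    Trm B Con τ' :=
  substV (vupd vid τ m t) φ

/-- Derivability in PRED2₀ (for a set `Δ` of hypotheses; the rules are the axiom,
`⊃`-introduction and elimination, and `∀`-introduction and elimination). -/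
inductive Deriv : Set (Trm B Con .o) → Trm B Con .o → Prop
  | ax {Δ : Set (Trm B Con .o)} {φ} : φ ∈ Δ → Deriv Δ φ
  | impI {Δ : Set (Trm B Con .o)} {φ ψ} : Deriv (insert φ Δ) ψ → Deriv Δ (.imp φ ψ)
  | impE {Δ : Set (Trm B Con .o)} {φ ψ} : Deriv Δ (.imp φ ψ) → Deriv Δ φ → Deriv Δ ψ
  | allI {Δ : Set (Trm B Con .o)} (τ : Ty B) (hτ : QTy τ) (m : Nat) {φ} :
      Deriv Δ φ → (∀ ψ ∈ Δ, (τ, m) ∉ FV ψ) → Deriv Δ (.all τ hτ m φ)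
  | allE {Δ : Set (Trm B Con .o)} {τ : Ty B} {hτ : QTy τ} {m : Nat} {φ} (t : Trm B Con τ) :
      Deriv Δ (.all τ hτ m φ) → Deriv Δ (subst1 τ m t φ)

/-- `Δ ⊢ φ` for an arbitrary set `Δ`: some finite subset of `Δ` derives `φ`. -/
def DerivFrom (Δ : Set (Trm B Con .o)) (φ : Trm B Con .o) : Prop :=
  ∃ Δ' ⊆ Δ, Δ'.Finite ∧ Deriv Δ' φ

end PRED2

namespace Embed

open ICL PRED2

/-- The primitive constants of the illative system `I₀` used for the embedding:
`Ξ`, `L`, `A_τ` for base types `τ`, and a constant for every constant of the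
PRED2₀ signature. -/
inductive SCon (B : Type) (Con : PRED2.Ty B → Type) : Type
  | Xi : SCon B Con
  | L : SCon B Con
  | A : B → SCon B Con
  | sig : {τ : PRED2.Ty B} → Con τ → SCon B Con

variable {B : Type} [DecidableEq B] {Con : PRED2.Ty B → Type}

/-- `F t₁ t₂`, written out according to the notational convention:
`λf. Ξ t₁ (λx. t₂ (f x))` if `t₂` is not a λ-abstraction, and
`λf. Ξ t₁ (λx. q₂[z/(f x)])` if `t₂ = λz. q₂`. -/
def Ft {C : Type} (cXi : C) (t1 t2 : Tm C) : Tm C :=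
  .lam (.app (.app (.const cXi) t1.lift)
    (match t2 with
     | .lam b => .lam (b.bind fun n => match n with
         | 0 => .app (.var 1) (.var 0)
         | m + 1 => .var (m + 2))
     | t2 => .lam (.app t2.lift.lift (.app (.var 1) (.var 0)))))

/-- `A_τ` : `A_o = H`, `A_τ` a constant for `τ ∈ B`, and `A_{τ₁→τ₂} = F A_{τ₁} A_{τ₂}`. -/
def Atm : PRED2.Ty B → Tm (SCon B Con)
  | .o => Hc SCon.L
  | .base b => .const (SCon.A b)
  | .arr b τ => Ft SCon.Xi (.const (SCon.A b)) (Atm τ)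

/-- The translation `⟦-⟧` from terms of PRED2₀ to λ-terms of `I₀`.  The argument
`env` assigns de Bruijn indices to the (named) free variables of PRED2₀. -/
def tr (env : PRED2.Ty B × Nat → Nat) :
    {τ : PRED2.Ty B} → Trm B Con τ → Tm (SCon B Con)
  | _, .var τ n => .var (env (τ, n))
  | _, .con c => .const (SCon.sig c)
  | _, .app f a => .app (tr env f) (tr env a)
  | _, .imp φ ψ => impTm SCon.Xi (tr env φ) (tr env ψ)
  | _, .all τ _ m φ =>
      .app (.app (XiT (SCon.Xi : SCon B Con)) (Atm τ))
        (.lam (tr (fun y => if y = (τ, m) then 0 else env y + 1) φ))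

/-- The context `Γ(Δ)` associated to a set `Δ` of formulas: it consists of
`A_τ x` for every free variable `x` of `Δ` of type `τ`, `A_τ c` for every
constant `c` of type `τ` of the signature, `L A_τ` for every base type `τ`,
and `A_τ y` for every base type `τ` and the chosen variable `y = yc τ`
(which is intended to be fresh for `Δ`). -/
def GammaSet (env : PRED2.Ty B × Nat → Nat) (Δ : Set (Trm B Con .o)) (yc : B → Nat) :
    Set (Tm (SCon B Con)) :=
  {t | ∃ (τ : PRED2.Ty B) (x : Nat), (∃ φ ∈ Δ, (τ, x) ∈ FV φ) ∧
        t = .app (Atm τ) (.var (env (τ, x)))} ∪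
  {t | ∃ (τ : PRED2.Ty B) (c : Con τ), t = .app (Atm τ) (.const (SCon.sig c))} ∪
  {t | ∃ b : B, t = .app (LT (SCon.L : SCon B Con)) (.const (SCon.A b))} ∪
  {t | ∃ b : B, t = .app (Atm (PRED2.Ty.base b)) (.var (env (PRED2.Ty.base b, yc b)))}

/-- Derivability in `I₀` from an arbitrary set of hypotheses. -/
def IDerivFrom (Γ : Set (Tm (SCon B Con))) (t : Tm (SCon B Con)) : Prop :=
  ∃ Γ' ⊆ Γ, Γ'.Finite ∧ IDeriv (SCon.Xi : SCon B Con) SCon.L SCon.A false false Γ' t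


/-!
The translation is generalised from variable assignments `env` to valuations `ρ` of the PRED2₀
variables by arbitrary λ-terms (`trV`). If `Γ` proves `A_τ (ρ x)` for every variable `x : τ` and
`A_τ c` for every constant `c : τ`, then every term of type `τ` translates to an inhabitant of
`A_τ`, and every rule of PRED2₀ is simulated in I₀ by the `Ξ`-rules: the body of `⟦∀x.φ⟧`
applied to a fresh variable `x` β-reduces to the translation of `φ` under the updated valuation,
and substitution commutes with the translation. Typing *every* variable is what lets
`⊃`-elimination through when its minor premise has free variables occurring nowhere else. For
the theorem, variables not free in `Δ ∪ {φ}` are valued in inhabitants of their types, which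
exist because `Γ(Δ)` inhabits every base type and `⊥ : H`, `K u : A_{b→τ}` if `u : A_τ`.
Finally, a derivation uses only finitely many hypotheses.
-/

end Embed

namespace ICL

namespace Tm

variable {C : Type}

def upS (σ : Nat → Tm C) : Nat → Tm C
  | 0 => .var 0
  | m + 1 => (σ m).lift

def upR (f : Nat → Nat) : Nat → Nat
  | 0 => 0
  | m + 1 => f m + 1

@[simp] lemma var_bind (σ : Nat → Tm C) (n : Nat) : (Tm.var n).bind σ = σ n := rfl

@[simp] lemma const_bind (σ : Nat → Tm C) (c : C) : (Tm.const c).bind σ = .const c := rfl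

@[simp] lemma app_bind (σ : Nat → Tm C) (a b : Tm C) :
    (Tm.app a b).bind σ = .app (a.bind σ) (b.bind σ) := rfl

@[simp] lemma upS_zero (σ : Nat → Tm C) : upS σ 0 = .var 0 := rfl

@[simp] lemma upS_succ (σ : Nat → Tm C) (m : Nat) : upS σ (m + 1) = (σ m).lift := rfl

@[simp] lemma lam_rename (f : Nat → Nat) (a : Tm C) :
    (Tm.lam a).rename f = .lam (a.rename (upR f)) := by
  simp only [rename]; congr

@[simp] lemma lam_bind (σ : Nat → Tm C) (a : Tm C) :
    (Tm.lam a).bind σ = .lam (a.bind (upS σ)) := by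
  simp only [bind]; congr

lemma rename_rename (f g : Nat → Nat) (t : Tm C) :
    (t.rename f).rename g = t.rename (g ∘ f) := by
  induction t generalizing f g with
  | lam a ih =>
    simp only [lam_rename, ih]
    congr; funext n; cases n <;> rfl
  | _ => simp_all [rename]

lemma bind_rename (σ : Nat → Tm C) (f : Nat → Nat) (t : Tm C) :
    (t.rename f).bind σ = t.bind (σ ∘ f) := by
  induction t generalizing σ f with
  | lam a ih =>
    simp only [lam_rename, lam_bind, ih]
    congr; funext n; cases n <;> rfl
  | _ => simp_all [rename, bind]

lemma rename_bind (f : Nat → Nat) (σ : Nat → Tm C) (t : Tm C) :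
    (t.bind σ).rename f = t.bind (fun n => (σ n).rename f) := by
  induction t generalizing σ f with
  | lam a ih =>
    simp only [lam_bind, lam_rename, ih]
    congr; funext n
    cases n with
    | zero => rfl
    | succ m => simp only [upS, lift, rename_rename]; rfl
  | _ => simp_all [rename, bind]

lemma lift_bind_upS (σ : Nat → Tm C) (t : Tm C) : t.lift.bind (upS σ) = (t.bind σ).lift := by
  simp only [lift, bind_rename, rename_bind]; rfl

lemma bind_bind (σ ρ : Nat → Tm C) (t : Tm C) :
    (t.bind σ).bind ρ = t.bind (fun n => (σ n).bind ρ) := by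
  induction t generalizing σ ρ with
  | lam a ih =>
    simp only [lam_bind, ih]
    congr; funext n
    cases n with
    | zero => rfl
    | succ m => exact lift_bind_upS ρ (σ m)
  | _ => simp_all [bind]

lemma bind_var_comp (f : Nat → Nat) (t : Tm C) : t.bind (fun n => .var (f n)) = t.rename f := by
  induction t generalizing f with
  | lam a ih =>
    simp only [lam_bind, lam_rename, ← ih]
    congr; funext n; cases n <;> rfl
  | _ => simp_all [rename, bind]

@[simp] lemma mem_fvar_rename {f : Nat → Nat} {t : Tm C} {m : Nat} :
    m ∈ (t.rename f).fvar ↔ ∃ n ∈ t.fvar, f n = m := by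
  induction t generalizing f m with
  | var n => simp [rename, fvar, eq_comm]
  | const c => simp [rename, fvar]
  | app a b iha ihb => simp only [rename, fvar, Set.mem_union, iha, ihb]; aesop
  | lam a ih =>
    simp only [lam_rename, fvar, Set.mem_ofPred_eq, ih]
    constructor
    · rintro ⟨(_ | k), hk, hfk⟩
      · simp [upR] at hfk
      · exact ⟨k, hk, by simpa [upR] using hfk⟩
    · rintro ⟨n, hn, rfl⟩
      exact ⟨n + 1, hn, rfl⟩

@[simp] lemma mem_fvar_bind {σ : Nat → Tm C} {t : Tm C} {m : Nat} :
    m ∈ (t.bind σ).fvar ↔ ∃ n ∈ t.fvar, m ∈ (σ n).fvar := by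
  induction t generalizing σ m with
  | var n => simp [bind, fvar]
  | const c => simp [bind, fvar]
  | app a b iha ihb => simp only [bind, fvar, Set.mem_union, iha, ihb]; aesop
  | lam a ih =>
    simp only [lam_bind, fvar, Set.mem_ofPred_eq, ih]
    constructor
    · rintro ⟨(_ | k), hk, hm⟩
      · simp [upS, fvar] at hm
      · simp only [upS, lift, mem_fvar_rename] at hm
        obtain ⟨j, hj, hjm⟩ := hm
        exact ⟨k, hk, Nat.succ_injective hjm ▸ hj⟩
    · rintro ⟨n, hn, hm⟩
      exact ⟨n + 1, hn, by simpa [upS, lift] using hm⟩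

lemma bind_congr {σ ρ : Nat → Tm C} {t : Tm C} (h : ∀ n ∈ t.fvar, σ n = ρ n) :
    t.bind σ = t.bind ρ := by
  induction t generalizing σ ρ with
  | var n => exact h n rfl
  | const c => rfl
  | app a b iha ihb =>
    simp only [bind]
    rw [iha fun n hn => h n (.inl hn), ihb fun n hn => h n (.inr hn)]
  | lam a ih =>
    simp only [lam_bind]
    rw [ih]
    rintro (_ | m) hm
    · rfl
    · simp [upS, h m hm]

lemma bind_update_of_notMem {σ : Nat → Tm C} {t u : Tm C} {x : Nat} (h : x ∉ t.fvar) :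
    t.bind (Function.update σ x u) = t.bind σ :=
  bind_congr fun _ hn => Function.update_of_ne (by rintro rfl; exact h hn) _ _

@[simp] lemma bind_var (t : Tm C) : t.bind .var = t := by
  induction t with
  | lam a ih =>
    simp only [lam_bind]
    conv_rhs => rw [← ih]
    congr; funext n; cases n <;> rfl
  | _ => simp_all [bind]

lemma bind_eq_self {σ : Nat → Tm C} {t : Tm C} (h : ∀ n ∈ t.fvar, σ n = .var n) :
    t.bind σ = t :=
  (bind_congr h).trans (bind_var t)

lemma fvar_finite (t : Tm C) : t.fvar.Finite := by
  induction t with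
  | var n => exact Set.finite_singleton n
  | const c => exact Set.finite_empty
  | app a b iha ihb => exact iha.union ihb
  | lam a ih => exact (ih.preimage Nat.succ_injective.injOn :)

lemma lift_eq_bind (t : Tm C) : t.lift = t.bind fun n => .var (n + 1) :=
  (bind_var_comp _ t).symm

def sub0 (s : Tm C) : Nat → Tm C
  | 0 => s
  | m + 1 => .var m

@[simp] lemma sub0_zero (s : Tm C) : sub0 s 0 = s := rfl

@[simp] lemma sub0_succ (s : Tm C) (m : Nat) : sub0 s (m + 1) = .var m := rfl

lemma subst0_eq_bind (t s : Tm C) : t.subst0 s = t.bind (sub0 s) := rfl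

@[simp] lemma lift_bind_sub0 (t s : Tm C) : t.lift.bind (sub0 s) = t := by
  simp only [lift, bind_rename]
  exact bind_eq_self fun _ _ => rfl

lemma lift_subst0 (t s : Tm C) : t.lift.subst0 s = t := lift_bind_sub0 t s

lemma bind_subst0 (σ : Nat → Tm C) (t s : Tm C) :
    (t.subst0 s).bind σ = (t.bind (upS σ)).subst0 (s.bind σ) := by
  simp only [subst0_eq_bind, bind_bind]
  apply bind_congr
  rintro (_ | m) _ <;> simp

end Tm

lemma BetaEta.bind {t t' : Tm C} (σ : Nat → Tm C) (h : BetaEta t t') :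
    BetaEta (t.bind σ) (t'.bind σ) := by
  induction h generalizing σ with
  | beta t s =>
    rw [Tm.bind_subst0]
    exact .beta _ _
  | eta t =>
    show BetaEta (.lam (.app (t.lift.bind (Tm.upS σ)) (.var 0))) _
    rw [Tm.lift_bind_upS]
    exact .eta _
  | appL s _ ih => exact .appL _ (ih σ)
  | appR t _ ih => exact .appR _ (ih σ)
  | lam _ ih => exact .lam (ih _)

namespace Conv

lemma refl (t : Tm C) : Conv t t := Relation.EqvGen.refl t

lemma symm {t s : Tm C} (h : Conv t s) : Conv s t := Relation.EqvGen.symm _ _ h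

lemma trans {t s u : Tm C} (h₁ : Conv t s) (h₂ : Conv s u) : Conv t u :=
  Relation.EqvGen.trans _ _ _ h₁ h₂

lemma beta (t s : Tm C) : Conv (.app (.lam t) s) (t.subst0 s) :=
  Relation.EqvGen.rel _ _ (.beta t s)

lemma beta_of_eq {t s u : Tm C} (h : t.subst0 s = u) : Conv (.app (.lam t) s) u :=
  h ▸ beta t s

lemma map {f : Tm C → Tm C} (hf : ∀ {t t'}, BetaEta t t' → BetaEta (f t) (f t'))
    {t t' : Tm C} (h : Conv t t') : Conv (f t) (f t') := by
  induction h with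
  | rel a b hab => exact Relation.EqvGen.rel _ _ (hf hab)
  | refl a => exact refl _
  | symm a b _ ih => exact ih.symm
  | trans a b c _ _ ih₁ ih₂ => exact ih₁.trans ih₂

lemma appL {t t' : Tm C} (s : Tm C) (h : Conv t t') : Conv (.app t s) (.app t' s) :=
  map (.appL s) h

lemma appR (t : Tm C) {s s' : Tm C} (h : Conv s s') : Conv (.app t s) (.app t s') :=
  map (.appR t) h

lemma lam {t t' : Tm C} (h : Conv t t') : Conv (.lam t) (.lam t') :=
  map .lam h

lemma bind {t t' : Tm C} (σ : Nat → Tm C) (h : Conv t t') : Conv (t.bind σ) (t'.bind σ) :=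
  map (BetaEta.bind σ) h

end Conv


/-- `K t`. -/
def Kt (t : Tm C) : Tm C := .lam t.lift

/-- `λz. t (u z)`. -/
def compT (t u : Tm C) : Tm C := .lam (.app t.lift (.app u.lift (.var 0)))

lemma Kt_app_conv (t u : Tm C) : Conv (.app (Kt t) u) t :=
  Conv.beta_of_eq (Tm.lift_subst0 t u)

lemma compT_app_conv (t u w : Tm C) : Conv (.app (compT t u) w) (.app t (.app u w)) :=
  Conv.beta_of_eq (by simp [Tm.subst0_eq_bind])

lemma Hc_app_conv (cL : C) (t : Tm C) : Conv (.app (Hc cL) t) (.app (LT cL) (Kt t)) :=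
  Conv.beta_of_eq rfl

@[simp] lemma impC_bind (cXi : C) (σ : Nat → Tm C) : (impC cXi).bind σ = impC cXi := rfl

lemma impTm_conv (cXi : C) (a b : Tm C) :
    Conv (impTm cXi a b) (.app (.app (XiT cXi) (Kt a)) (Kt b)) :=
  (Conv.appL b (Conv.beta _ a)).trans <| Conv.beta_of_eq <| by
    simp [Tm.subst0_eq_bind, Kt, Tm.lift_bind_upS, XiT]

open Embed in
lemma Ft_conv (cXi : C) (t₁ t₂ : Tm C) :
    Conv (Ft cXi t₁ t₂) (.lam (.app (.app (.const cXi) t₁.lift)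
      (.lam (.app t₂.lift.lift (.app (.var 1) (.var 0)))))) := by
  cases t₂ with
  | lam b =>
    refine Conv.lam (Conv.appR _ (Conv.lam (Conv.symm (Conv.beta_of_eq ?_))))
    simp only [Tm.rename_rename, Tm.subst0_eq_bind, Tm.bind_rename]
    congr; funext n; rcases n with _ | _ | n <;> rfl
  | _ => exact Conv.refl _

open Embed in
lemma Ft_app_conv (cXi : C) (t₁ t₂ u : Tm C) :
    Conv (.app (Ft cXi t₁ t₂) u) (.app (.app (XiT cXi) t₁) (compT t₂ u)) :=
  (Conv.appL u (Ft_conv cXi t₁ t₂)).trans <| Conv.beta_of_eq <| by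
    simp [Tm.subst0_eq_bind, Tm.lift_bind_upS, compT, XiT]

lemma mem_fvS {x : Nat} {Γ : Set (Tm C)} : x ∈ fvS Γ ↔ ∃ t ∈ Γ, x ∈ t.fvar := by
  simp [fvS]

lemma fvS_mono {Γ Γ' : Set (Tm C)} (h : Γ ⊆ Γ') : fvS Γ ⊆ fvS Γ' :=
  Set.biUnion_subset_biUnion_left h

lemma fvS_insert (s : Tm C) (Γ : Set (Tm C)) : fvS (insert s Γ) = s.fvar ∪ fvS Γ :=
  Set.biUnion_insert _ _ _

lemma fvS_union (Γ Γ' : Set (Tm C)) : fvS (Γ ∪ Γ') = fvS Γ ∪ fvS Γ' :=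
  Set.biUnion_union _ _ _

lemma infinite_compl_fvS_insert {Γ : Set (Tm C)} (h : (fvS Γ)ᶜ.Infinite) (s : Tm C) :
    (fvS (insert s Γ))ᶜ.Infinite := by
  rw [fvS_insert, Set.compl_union, Set.inter_comm, ← Set.sdiff_eq]
  exact h.sdiff (Tm.fvar_finite s)

lemma finite_fvS {Γ : Set (Tm C)} (h : Γ.Finite) : (fvS Γ).Finite :=
  h.biUnion fun t _ => Tm.fvar_finite t

lemma infinite_compl_fvS_of_finite {Γ : Set (Tm C)} (h : Γ.Finite) : (fvS Γ)ᶜ.Infinite :=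
  (finite_fvS h).infinite_compl

lemma exists_fresh {Γ : Set (Tm C)} (h : (fvS Γ)ᶜ.Infinite) {s : Set Nat} (hs : s.Finite) :
    ∃ x, x ∉ fvS Γ ∧ x ∉ s :=
  (h.sdiff hs).nonempty

lemma mapsTo_insert_update {Γ Γ' : Set (Tm C)} {σ : Nat → Tm C} {t : Tm C} {x x' : Nat}
    (hσ : Set.MapsTo (Tm.bind σ) Γ Γ') (hxΓ : x ∉ fvS Γ) (hxt : x ∉ t.fvar) :
    Set.MapsTo (Tm.bind (Function.update σ x (.var x')))
      (insert (.app t (.var x)) Γ) (insert (.app (t.bind σ) (.var x')) Γ') := by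
  rintro s (rfl | hs)
  · simp [Tm.bind_update_of_notMem hxt]
  · rw [Tm.bind_update_of_notMem fun hx => hxΓ (mem_fvS.2 ⟨s, hs, hx⟩)]
    exact Set.mem_insert_of_mem _ (hσ hs)

variable {B : Type} {cXi cL : C} {cA : B → C} {fl dn : Bool}

theorem IDeriv.bind_of_mapsTo {Γ : Set (Tm C)} {t : Tm C} (h : IDeriv cXi cL cA fl dn Γ t)
    {σ : Nat → Tm C} {Γ' : Set (Tm C)} (hσ : Set.MapsTo (Tm.bind σ) Γ Γ')
    (hΓ' : (fvS Γ')ᶜ.Infinite) : IDeriv cXi cL cA fl dn Γ' (t.bind σ) := by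
  induction h generalizing σ Γ' with
  | ax h => exact .ax (hσ h)
  | axLH => exact .axLH
  | axLA b => exact .axLA b
  | axDN hdn => exact .axDN hdn
  | eq _ hconv ih => exact .eq (ih hσ hΓ') (hconv.bind σ)
  | hi _ ih => exact .hi (ih hσ hΓ')
  | xiE _ _ ih₁ ih₂ => exact .xiE (ih₁ hσ hΓ') (ih₂ hσ hΓ')
  | @xiI Γ t₁ t₂ x _ _ hxΓ hx₁ hx₂ ih₁ ih₂ =>
    obtain ⟨x', hx'Γ', hx'⟩ :=
      exists_fresh hΓ' ((Tm.fvar_finite (t₁.bind σ)).union (Tm.fvar_finite (t₂.bind σ)))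
    have h₁ := ih₁ (mapsTo_insert_update (x' := x') hσ hxΓ hx₁)
      (infinite_compl_fvS_insert hΓ' _)
    simp only [Tm.app_bind, Tm.var_bind, Function.update_self,
      Tm.bind_update_of_notMem hx₂] at h₁
    exact .xiI x' h₁ (ih₂ hσ hΓ') hx'Γ' (fun h => hx' (.inl h)) (fun h => hx' (.inr h))
  | @xiH Γ t₁ t₂ x _ _ hxΓ hx₁ hx₂ ih₁ ih₂ =>
    obtain ⟨x', hx'Γ', hx'⟩ :=
      exists_fresh hΓ' ((Tm.fvar_finite (t₁.bind σ)).union (Tm.fvar_finite (t₂.bind σ)))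
    have h₁ := ih₁ (mapsTo_insert_update (x' := x') hσ hxΓ hx₁)
      (infinite_compl_fvS_insert hΓ' _)
    simp only [Tm.app_bind, Tm.var_bind, Function.update_self,
      Tm.bind_update_of_notMem hx₂] at h₁
    exact .xiH x' h₁ (ih₂ hσ hΓ') hx'Γ' (fun h => hx' (.inl h)) (fun h => hx' (.inr h))
  | @fL Γ t₁ t₂ x hfl _ _ hxΓ hx₁ hx₂ ih₁ ih₂ =>
    obtain ⟨x', hx'Γ', hx'⟩ :=
      exists_fresh hΓ' ((Tm.fvar_finite (t₁.bind σ)).union (Tm.fvar_finite (t₂.bind σ)))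
    have h₁ := ih₁ (mapsTo_insert_update (x' := x') hσ hxΓ hx₁)
      (infinite_compl_fvS_insert hΓ' _)
    simp only [Tm.app_bind, Tm.bind_update_of_notMem hx₂] at h₁
    exact .fL x' hfl h₁ (ih₂ hσ hΓ') hx'Γ' (fun h => hx' (.inl h)) (fun h => hx' (.inr h))

theorem IDeriv.mono {Γ Γ' : Set (Tm C)} {t : Tm C} (h : IDeriv cXi cL cA fl dn Γ t)
    (hΓ : Γ ⊆ Γ') (hΓ' : (fvS Γ')ᶜ.Infinite) : IDeriv cXi cL cA fl dn Γ' t := by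
  simpa using h.bind_of_mapsTo (σ := .var) (fun s hs => by simpa using hΓ hs) hΓ'

lemma exists_finite_of_subset_insert {Γ₁ Γ₂ Δ : Set (Tm C)} {s : Tm C}
    (h₁ : Γ₁ ⊆ insert s Δ) (h₂ : Γ₂ ⊆ Δ) (hfin₁ : Γ₁.Finite) (hfin₂ : Γ₂.Finite) :
    ∃ Γ ⊆ Δ, Γ.Finite ∧ Γ₁ ⊆ insert s Γ ∧ Γ₂ ⊆ Γ := by
  refine ⟨Γ₁ \ {s} ∪ Γ₂, ?_, hfin₁.sdiff.union hfin₂, ?_, Set.subset_union_right⟩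
  · refine Set.union_subset (fun u hu => ?_) h₂
    exact (h₁ hu.1).resolve_left hu.2
  · intro u hu
    by_cases hus : u = s
    · exact .inl hus
    · exact .inr (.inl ⟨hu, hus⟩)

theorem IDeriv.exists_finite {Γ : Set (Tm C)} {t : Tm C} (h : IDeriv cXi cL cA fl dn Γ t) :
    ∃ Γ' ⊆ Γ, Γ'.Finite ∧ IDeriv cXi cL cA fl dn Γ' t := by
  induction h with
  | @ax Γ t ht => exact ⟨{t}, Set.singleton_subset_iff.2 ht, Set.finite_singleton t, .ax rfl⟩
  | axLH => exact ⟨∅, Set.empty_subset _, Set.finite_empty, .axLH⟩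
  | axLA b => exact ⟨∅, Set.empty_subset _, Set.finite_empty, .axLA b⟩
  | axDN hdn => exact ⟨∅, Set.empty_subset _, Set.finite_empty, .axDN hdn⟩
  | eq _ hconv ih =>
    obtain ⟨Γ', hΓ', hfin, hd⟩ := ih
    exact ⟨Γ', hΓ', hfin, .eq hd hconv⟩
  | hi _ ih =>
    obtain ⟨Γ', hΓ', hfin, hd⟩ := ih
    exact ⟨Γ', hΓ', hfin, .hi hd⟩
  | xiE _ _ ih₁ ih₂ =>
    obtain ⟨Γ₁, hΓ₁, hfin₁, hd₁⟩ := ih₁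
    obtain ⟨Γ₂, hΓ₂, hfin₂, hd₂⟩ := ih₂
    have hfin := hfin₁.union hfin₂
    have hcof := infinite_compl_fvS_of_finite hfin
    exact ⟨Γ₁ ∪ Γ₂, Set.union_subset hΓ₁ hΓ₂, hfin,
      .xiE (hd₁.mono Set.subset_union_left hcof) (hd₂.mono Set.subset_union_right hcof)⟩
  | xiI x _ _ hxΓ hx₁ hx₂ ih₁ ih₂ =>
    obtain ⟨Γ₁, hΓ₁, hfin₁, hd₁⟩ := ih₁
    obtain ⟨Γ₂, hΓ₂, hfin₂, hd₂⟩ := ih₂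
    obtain ⟨Γ', hΓ', hfin, h₁, h₂⟩ := exists_finite_of_subset_insert hΓ₁ hΓ₂ hfin₁ hfin₂
    have hcof := infinite_compl_fvS_of_finite hfin
    exact ⟨Γ', hΓ', hfin, .xiI x (hd₁.mono h₁ (infinite_compl_fvS_insert hcof _))
      (hd₂.mono h₂ hcof) (fun h => hxΓ (fvS_mono hΓ' h)) hx₁ hx₂⟩
  | xiH x _ _ hxΓ hx₁ hx₂ ih₁ ih₂ =>
    obtain ⟨Γ₁, hΓ₁, hfin₁, hd₁⟩ := ih₁
    obtain ⟨Γ₂, hΓ₂, hfin₂, hd₂⟩ := ih₂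
    obtain ⟨Γ', hΓ', hfin, h₁, h₂⟩ := exists_finite_of_subset_insert hΓ₁ hΓ₂ hfin₁ hfin₂
    have hcof := infinite_compl_fvS_of_finite hfin
    exact ⟨Γ', hΓ', hfin, .xiH x (hd₁.mono h₁ (infinite_compl_fvS_insert hcof _))
      (hd₂.mono h₂ hcof) (fun h => hxΓ (fvS_mono hΓ' h)) hx₁ hx₂⟩
  | fL x hfl _ _ hxΓ hx₁ hx₂ ih₁ ih₂ =>
    obtain ⟨Γ₁, hΓ₁, hfin₁, hd₁⟩ := ih₁
    obtain ⟨Γ₂, hΓ₂, hfin₂, hd₂⟩ := ih₂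
    obtain ⟨Γ', hΓ', hfin, h₁, h₂⟩ := exists_finite_of_subset_insert hΓ₁ hΓ₂ hfin₁ hfin₂
    have hcof := infinite_compl_fvS_of_finite hfin
    exact ⟨Γ', hΓ', hfin, .fL x hfl (hd₁.mono h₁ (infinite_compl_fvS_insert hcof _))
      (hd₂.mono h₂ hcof) (fun h => hxΓ (fvS_mono hΓ' h)) hx₁ hx₂⟩

theorem IDeriv.xiI_of_forall {Γ : Set (Tm C)} {t₁ t₂ : Tm C} (hΓ : (fvS Γ)ᶜ.Infinite)
    (h : ∀ x ∉ fvS Γ, IDeriv cXi cL cA fl dn (insert (.app t₁ (.var x)) Γ) (.app t₂ (.var x)))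
    (hL : IDeriv cXi cL cA fl dn Γ (.app (LT cL) t₁)) :
    IDeriv cXi cL cA fl dn Γ (.app (.app (XiT cXi) t₁) t₂) :=
  have ⟨x, hxΓ, hx⟩ := exists_fresh hΓ ((Tm.fvar_finite t₁).union (Tm.fvar_finite t₂))
  .xiI x (h x hxΓ) hL hxΓ (fun h => hx (.inl h)) (fun h => hx (.inr h))

theorem IDeriv.xiH_of_forall {Γ : Set (Tm C)} {t₁ t₂ : Tm C} (hΓ : (fvS Γ)ᶜ.Infinite)
    (h : ∀ x ∉ fvS Γ,
      IDeriv cXi cL cA fl dn (insert (.app t₁ (.var x)) Γ) (.app (Hc cL) (.app t₂ (.var x))))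
    (hL : IDeriv cXi cL cA fl dn Γ (.app (LT cL) t₁)) :
    IDeriv cXi cL cA fl dn Γ (.app (Hc cL) (.app (.app (XiT cXi) t₁) t₂)) :=
  have ⟨x, hxΓ, hx⟩ := exists_fresh hΓ ((Tm.fvar_finite t₁).union (Tm.fvar_finite t₂))
  .xiH x (h x hxΓ) hL hxΓ (fun h => hx (.inl h)) (fun h => hx (.inr h))

theorem IDeriv.L_Kt_of_H {Γ : Set (Tm C)} {a : Tm C}
    (h : IDeriv cXi cL cA fl dn Γ (.app (Hc cL) a)) :
    IDeriv cXi cL cA fl dn Γ (.app (LT cL) (Kt a)) :=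
  .eq h (Hc_app_conv cL a)

theorem IDeriv.imp_intro {Γ : Set (Tm C)} {a b : Tm C} (hΓ : (fvS Γ)ᶜ.Infinite)
    (h : ∀ x ∉ fvS Γ, IDeriv cXi cL cA fl dn (insert (.app (Kt a) (.var x)) Γ) b)
    (ha : IDeriv cXi cL cA fl dn Γ (.app (Hc cL) a)) :
    IDeriv cXi cL cA fl dn Γ (impTm cXi a b) :=
  .eq (xiI_of_forall hΓ (fun x hx => .eq (h x hx) (Kt_app_conv b _).symm) ha.L_Kt_of_H)
    (impTm_conv cXi a b).symm

theorem IDeriv.imp_elim {Γ : Set (Tm C)} {a b : Tm C}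
    (h : IDeriv cXi cL cA fl dn Γ (impTm cXi a b)) (ha : IDeriv cXi cL cA fl dn Γ a) :
    IDeriv cXi cL cA fl dn Γ b :=
  .eq (.xiE (.eq h (impTm_conv cXi a b)) (.eq ha (Kt_app_conv a a).symm)) (Kt_app_conv b a)

theorem IDeriv.H_imp {Γ : Set (Tm C)} {a b : Tm C} (hΓ : (fvS Γ)ᶜ.Infinite)
    (h : ∀ x ∉ fvS Γ,
      IDeriv cXi cL cA fl dn (insert (.app (Kt a) (.var x)) Γ) (.app (Hc cL) b))
    (ha : IDeriv cXi cL cA fl dn Γ (.app (Hc cL) a)) :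
    IDeriv cXi cL cA fl dn Γ (.app (Hc cL) (impTm cXi a b)) :=
  .eq (xiH_of_forall hΓ (fun x hx => .eq (h x hx) (Conv.appR _ (Kt_app_conv b _).symm))
    ha.L_Kt_of_H) (Conv.appR _ (impTm_conv cXi a b).symm)

theorem IDeriv.H_botT {Γ : Set (Tm C)} (hΓ : (fvS Γ)ᶜ.Infinite) :
    IDeriv cXi cL cA fl dn Γ (.app (Hc cL) (botT cXi cL)) :=
  xiH_of_forall hΓ
    (fun _ _ => .eq (.ax (Set.mem_insert _ _)) (Conv.appR _ (Conv.beta (.var 0) _).symm)) .axLH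

end ICL

namespace PRED2

variable {B : Type} [DecidableEq B] {Con : Ty B → Type}

@[simp] lemma vupd_self (v : ∀ τ : Ty B, Nat → Trm B Con τ) (τ : Ty B) (m : Nat)
    (t : Trm B Con τ) : vupd v τ m t τ m = t := by
  simp [vupd]

lemma vupd_of_ne (v : ∀ τ : Ty B, Nat → Trm B Con τ) (τ₀ : Ty B) (m : Nat) (t : Trm B Con τ₀)
    {τ : Ty B} {n : Nat} (h : (τ, n) ≠ (τ₀, m)) : vupd v τ₀ m t τ n = v τ n := by
  unfold vupd
  split_ifs with hτ hn
  · subst hτ hn; exact absurd rfl h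
  · rfl
  · rfl

lemma fresh_notMem_FV (v : ∀ τ : Ty B, Nat → Trm B Con τ) {s : Finset (Ty B × Nat)}
    {y : Ty B × Nat} (hy : y ∈ s) (τ : Ty B) : (τ, fresh v s) ∉ FV (v y.1 y.2) := by
  intro hmem
  have h₁ := Finset.le_sup (f := fun z => z.2) hmem
  have h₂ := Finset.le_sup (f := fun y => (FV (v y.1 y.2)).sup fun z => z.2) hy
  simp only [fresh] at h₁
  omega

end PRED2

namespace Embed

open ICL PRED2

section

lemma fvar_Ft_subset {C : Type} (cXi : C) (t₁ t₂ : Tm C) :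
    (Ft cXi t₁ t₂).fvar ⊆ t₁.fvar ∪ t₂.fvar := by
  intro n hn
  cases t₂ with
  | lam b =>
    simp [Ft, Tm.fvar, Tm.lift] at hn
    rcases hn with h | ⟨_ | k, hk, hm⟩
    · exact .inl h
    · simp [Tm.fvar] at hm
    · simp only [Tm.fvar, Set.mem_singleton_iff, add_left_inj] at hm
      exact .inr (hm ▸ hk)
  | _ =>
    simp [Ft, Tm.fvar, Tm.lift] at hn ⊢
    tauto

variable {B : Type} {Con : Ty B → Type}

@[simp] lemma fvar_Atm (τ : Ty B) : (Atm (Con := Con) τ).fvar = ∅ := by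
  induction τ with
  | o => ext n; simp [Atm, Hc, Tm.fvar]
  | base b => rfl
  | arr b τ ih =>
    refine Set.eq_empty_of_subset_empty ((fvar_Ft_subset _ _ _).trans ?_)
    simp [ih, Tm.fvar]

@[simp] lemma Atm_bind (σ : Nat → Tm (SCon B Con)) (τ : Ty B) :
    (Atm (Con := Con) τ).bind σ = Atm τ :=
  Tm.bind_eq_self (by simp)

variable {fl dn : Bool}

/-- The unused variables of `Γ` supply the eigenvariables of the `Ξ`-rules. -/
structure IsTypingCtx (fl dn : Bool) (Γ : Set (Tm (SCon B Con)))
    (ρ : Ty B × Nat → Tm (SCon B Con)) : Prop where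
  infinite_compl_fvS : (fvS Γ)ᶜ.Infinite
  typed_val (y : Ty B × Nat) : IDeriv SCon.Xi SCon.L SCon.A fl dn Γ (.app (Atm y.1) (ρ y))
  typed_con {τ : Ty B} (c : Con τ) :
    IDeriv SCon.Xi SCon.L SCon.A fl dn Γ (.app (Atm τ) (.const (SCon.sig c)))

namespace IsTypingCtx

variable {Γ : Set (Tm (SCon B Con))} {ρ : Ty B × Nat → Tm (SCon B Con)}

lemma insert (h : IsTypingCtx fl dn Γ ρ) (s : Tm (SCon B Con)) :
    IsTypingCtx fl dn (insert s Γ) ρ :=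
  have hΓ := infinite_compl_fvS_insert h.infinite_compl_fvS s
  ⟨hΓ, fun y => (h.typed_val y).mono (Set.subset_insert _ _) hΓ,
    fun c => (h.typed_con c).mono (Set.subset_insert _ _) hΓ⟩

end IsTypingCtx

theorem _root_.ICL.IDeriv.L_Atm {Γ : Set (Tm (SCon B Con))} {τ : Ty B} (hτ : QTy τ) :
    IDeriv SCon.Xi SCon.L SCon.A fl dn Γ (.app (LT SCon.L) (Atm τ)) := by
  obtain rfl | ⟨b, rfl⟩ := hτ
  exacts [.axLH, .axLA b]

theorem exists_inhabitant_Atm {Γ : Set (Tm (SCon B Con))} (hΓ : (fvS Γ)ᶜ.Infinite)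
    (hB : ∀ b, ∃ u, IDeriv SCon.Xi SCon.L SCon.A fl dn Γ (.app (Atm (.base b)) u)) (τ : Ty B) :
    ∃ u, IDeriv SCon.Xi SCon.L SCon.A fl dn Γ (.app (Atm τ) u) := by
  induction τ with
  | o => exact ⟨_, .H_botT hΓ⟩
  | base b => exact hB b
  | arr b τ ih =>
    obtain ⟨u, hu⟩ := ih
    refine ⟨Kt u, .eq (.xiI_of_forall hΓ (fun x _ => .eq (hu.mono (Set.subset_insert _ _)
      (infinite_compl_fvS_insert hΓ _)) ?_) (.axLA b)) (Ft_app_conv _ _ _ _).symm⟩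
    exact ((compT_app_conv _ _ _).trans (Conv.appR _ (Kt_app_conv _ _))).symm

lemma _root_.ICL.IDeriv.iDerivFrom {Γ Γ' : Set (Tm (SCon B Con))} {t : Tm (SCon B Con)}
    (h : IDeriv SCon.Xi SCon.L SCon.A false false Γ t) (hΓ : Γ ⊆ Γ') : IDerivFrom Γ' t :=
  have ⟨Γ₀, hΓ₀, hfin, hd⟩ := h.exists_finite
  ⟨Γ₀, hΓ₀.trans hΓ, hfin, hd⟩

variable [DecidableEq B]

lemma IsTypingCtx.update {Γ : Set (Tm (SCon B Con))} {ρ : Ty B × Nat → Tm (SCon B Con)}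
    (h : IsTypingCtx fl dn Γ ρ) (y : Ty B × Nat) (u : Tm (SCon B Con)) :
    IsTypingCtx fl dn (Insert.insert (.app (Atm y.1) u) Γ) (Function.update ρ y u) := by
  refine ⟨(h.insert _).infinite_compl_fvS, fun z => ?_, (h.insert _).typed_con⟩
  by_cases hz : z = y
  · subst hz
    simpa using IDeriv.ax (Set.mem_insert _ _)
  · simpa [hz] using (h.insert _).typed_val z

def underBinder {C : Type} (ρ : Ty B × Nat → Tm C) (y : Ty B × Nat) : Ty B × Nat → Tm C :=
  Function.update (fun z => (ρ z).lift) y (.var 0)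

def trV (ρ : Ty B × Nat → Tm (SCon B Con)) : {τ : Ty B} → Trm B Con τ → Tm (SCon B Con)
  | _, .var τ n => ρ (τ, n)
  | _, .con c => .const (SCon.sig c)
  | _, .app f a => .app (trV ρ f) (trV ρ a)
  | _, .imp φ ψ => impTm SCon.Xi (trV ρ φ) (trV ρ ψ)
  | _, .all τ _ m φ => .app (.app (XiT SCon.Xi) (Atm τ)) (.lam (trV (underBinder ρ (τ, m)) φ))

lemma tr_eq_trV (env : Ty B × Nat → Nat) {τ : Ty B} (q : Trm B Con τ) :
    tr env q = trV (fun y => .var (env y)) q := by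
  induction q generalizing env with
  | all τ _ m φ ih =>
    simp only [tr, trV, ih]
    congr; funext y
    by_cases hy : y = (τ, m) <;> simp [underBinder, hy, Tm.lift, Tm.rename]
  | _ => simp_all [tr, trV]

lemma trV_congr {ρ ρ' : Ty B × Nat → Tm (SCon B Con)} {τ : Ty B} {q : Trm B Con τ}
    (h : ∀ y ∈ FV q, ρ y = ρ' y) : trV ρ q = trV ρ' q := by
  induction q generalizing ρ ρ' with
  | var τ n => exact h _ (Finset.mem_singleton_self _)
  | con c => rfl
  | app f a ihf iha =>
    simp only [trV]
    rw [ihf fun y hy => h y (by simp [FV, hy]), iha fun y hy => h y (by simp [FV, hy])]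
  | imp φ ψ ihφ ihψ =>
    simp only [trV]
    rw [ihφ fun y hy => h y (by simp [FV, hy]), ihψ fun y hy => h y (by simp [FV, hy])]
  | all τ _ m φ ih =>
    simp only [trV]
    rw [ih fun y hy => ?_]
    by_cases hym : y = (τ, m)
    · simp [underBinder, hym]
    · simp [underBinder, hym, h y (by simp [FV, hym, hy])]

lemma trV_bind (ρ : Ty B × Nat → Tm (SCon B Con)) (σ : Nat → Tm (SCon B Con)) {τ : Ty B}
    (q : Trm B Con τ) : (trV ρ q).bind σ = trV (fun y => (ρ y).bind σ) q := by
  induction q generalizing ρ σ with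
  | all τ _ m φ ih =>
    simp only [trV, Tm.app_bind, Tm.lam_bind, ih, XiT, Tm.const_bind, Atm_bind]
    congr; funext y
    by_cases hy : y = (τ, m) <;> simp [underBinder, hy, Tm.lift_bind_upS]
  | _ => simp_all [trV, impTm]

lemma trV_lift (ρ : Ty B × Nat → Tm (SCon B Con)) {τ : Ty B} (q : Trm B Con τ) :
    trV (fun y => (ρ y).lift) q = (trV ρ q).lift := by
  simp only [Tm.lift_eq_bind, trV_bind]

lemma trV_underBinder_subst0 (ρ : Ty B × Nat → Tm (SCon B Con)) (y : Ty B × Nat)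
    (φ : Trm B Con .o) (w : Tm (SCon B Con)) :
    (trV (underBinder ρ y) φ).subst0 w = trV (Function.update ρ y w) φ := by
  rw [Tm.subst0_eq_bind, trV_bind]
  congr; funext z
  by_cases hz : z = y <;> simp [underBinder, hz]

lemma trV_substV (ρ : Ty B × Nat → Tm (SCon B Con)) (v : ∀ τ : Ty B, Nat → Trm B Con τ)
    {τ : Ty B} (q : Trm B Con τ) :
    trV ρ (substV v q) = trV (fun y => trV ρ (v y.1 y.2)) q := by
  induction q generalizing ρ v with
  | all τ _ m φ ih =>
    simp only [substV, trV, ih]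
    congr 2
    apply trV_congr
    intro y hy
    by_cases hym : y = (τ, m)
    · subst hym; simp [underBinder, trV]
    · have hy' : y ∈ (FV φ).erase (τ, m) := Finset.mem_erase.2 ⟨hym, hy⟩
      simp only [vupd_of_ne _ _ _ _ hym, underBinder, Function.update_of_ne hym, ← trV_lift]
      apply trV_congr
      intro z hz
      exact Function.update_of_ne (by rintro rfl; exact fresh_notMem_FV v hy' τ hz) _ _
  | _ => simp_all [substV, trV]

lemma trV_subst1 (ρ : Ty B × Nat → Tm (SCon B Con)) {τ : Ty B} (m : Nat) (t : Trm B Con τ)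
    (φ : Trm B Con .o) :
    trV ρ (subst1 τ m t φ) = (trV (underBinder ρ (τ, m)) φ).subst0 (trV ρ t) := by
  rw [subst1, trV_substV, trV_underBinder_subst0]
  congr; funext ⟨τ', n⟩
  by_cases h : (τ', n) = (τ, m)
  · obtain ⟨rfl, rfl⟩ := Prod.mk.inj h
    simp
  · simp [vupd_of_ne _ _ _ _ h, Function.update_of_ne h, vid, trV]

lemma conv_lam_trV_app (ρ : Ty B × Nat → Tm (SCon B Con)) (y : Ty B × Nat)
    (φ : Trm B Con .o) (w : Tm (SCon B Con)) :
    Conv (.app (.lam (trV (underBinder ρ y) φ)) w) (trV (Function.update ρ y w) φ) :=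
  Conv.beta_of_eq (trV_underBinder_subst0 ρ y φ w)

theorem IsTypingCtx.typed_trV {Γ : Set (Tm (SCon B Con))} {ρ : Ty B × Nat → Tm (SCon B Con)}
    (hΓ : IsTypingCtx fl dn Γ ρ) {τ : Ty B} (q : Trm B Con τ) :
    IDeriv SCon.Xi SCon.L SCon.A fl dn Γ (.app (Atm τ) (trV ρ q)) := by
  induction q generalizing Γ ρ with
  | var τ n => exact hΓ.typed_val (τ, n)
  | con c => exact hΓ.typed_con c
  | app f a ihf iha =>
    exact .eq (.xiE (.eq (ihf hΓ) (Ft_app_conv _ _ _ _)) (iha hΓ)) (compT_app_conv _ _ _)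
  | imp φ ψ ihφ ihψ =>
    exact .H_imp hΓ.infinite_compl_fvS (fun _ _ => ihψ (hΓ.insert _)) (ihφ hΓ)
  | all τ hτ m φ ih =>
    refine .xiH_of_forall hΓ.infinite_compl_fvS (fun x _ => ?_) (.L_Atm hτ)
    exact .eq (ih (hΓ.update (τ, m) (.var x))) (Conv.appR _ (conv_lam_trV_app _ _ _ _).symm)

theorem _root_.PRED2.Deriv.iDeriv_trV {Δ : Set (Trm B Con .o)} {χ : Trm B Con .o} (d : Deriv Δ χ)
    {Γ : Set (Tm (SCon B Con))} {ρ : Ty B × Nat → Tm (SCon B Con)}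
    (hΓ : IsTypingCtx fl dn Γ ρ) (hΔ : ∀ ψ ∈ Δ, IDeriv SCon.Xi SCon.L SCon.A fl dn Γ (trV ρ ψ)) :
    IDeriv SCon.Xi SCon.L SCon.A fl dn Γ (trV ρ χ) := by
  induction d generalizing Γ ρ with
  | ax hχ => exact hΔ _ hχ
  | @impI Δ φ ψ _ ih =>
    refine .imp_intro hΓ.infinite_compl_fvS (fun x _ => ih (hΓ.insert _) ?_) (hΓ.typed_trV φ)
    rintro ψ' (rfl | hψ')
    · exact .eq (.ax (Set.mem_insert _ _)) (Kt_app_conv _ _)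
    · exact (hΔ ψ' hψ').mono (Set.subset_insert _ _) (hΓ.insert _).infinite_compl_fvS
  | impE _ _ ih₁ ih₂ => exact (ih₁ hΓ hΔ).imp_elim (ih₂ hΓ hΔ)
  | @allI Δ τ hτ m φ _ hfresh ih =>
    refine .xiI_of_forall hΓ.infinite_compl_fvS (fun x _ => ?_) (.L_Atm hτ)
    have hΓ' := hΓ.update (τ, m) (.var x)
    refine .eq (ih hΓ' fun ψ hψ => ?_) (conv_lam_trV_app _ _ _ _).symm
    have hψ' : trV (Function.update ρ (τ, m) (.var x)) ψ = trV ρ ψ :=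
      trV_congr fun y hy => Function.update_of_ne (by rintro rfl; exact hfresh ψ hψ hy) _ _
    rw [hψ']
    exact (hΔ ψ hψ).mono (Set.subset_insert _ _) hΓ'.infinite_compl_fvS
  | allE t _ ih =>
    rw [trV_subst1]
    exact .eq (.xiE (ih hΓ hΔ) (hΓ.typed_trV t)) (Conv.beta _ _)

lemma GammaSet_mono (env : Ty B × Nat → Nat) {Δ Δ' : Set (Trm B Con .o)} (h : Δ ⊆ Δ')
    (yc : B → Nat) : GammaSet env Δ yc ⊆ GammaSet env Δ' yc := by
  rintro t (((⟨τ, x, ⟨ψ, hψ, hx⟩, rfl⟩ | ht) | ht) | ht)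
  exacts [.inl (.inl (.inl ⟨τ, x, ⟨ψ, h hψ, hx⟩, rfl⟩)), .inl (.inl (.inr ht)), .inl (.inr ht),
    .inr ht]

lemma finite_fvS_GammaSet [Finite B] (env : Ty B × Nat → Nat) {Δ : Set (Trm B Con .o)}
    (hΔ : Δ.Finite) (yc : B → Nat) : (fvS (GammaSet env Δ yc)).Finite := by
  refine (((hΔ.biUnion fun ψ _ => (FV ψ).finite_toSet).image env).union
    (Set.finite_range fun b => env (.base b, yc b))).subset ?_
  intro n hn
  obtain ⟨t, ht, hnt⟩ := mem_fvS.1 hn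
  rcases ht with (((⟨τ, x, ⟨ψ, hψ, hx⟩, rfl⟩ | ⟨τ, c, rfl⟩) | ⟨b, rfl⟩) | ⟨b, rfl⟩) <;>
    simp [Tm.fvar, ICL.LT] at hnt
  · exact .inl ⟨(τ, x), Set.mem_biUnion hψ hx, hnt.symm⟩
  · exact .inr ⟨b, hnt.symm⟩

theorem exists_isTypingCtx_of_GammaSet_subset (env : Ty B × Nat → Nat) {Δ : Set (Trm B Con .o)}
    (yc : B → Nat) {Γ : Set (Tm (SCon B Con))} (hΓ : (fvS Γ)ᶜ.Infinite)
    (hsub : GammaSet env Δ yc ⊆ Γ) :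
    ∃ ρ, IsTypingCtx fl dn Γ ρ ∧ ∀ ψ ∈ Δ, trV ρ ψ = tr env ψ := by
  classical
  choose u hu using exists_inhabitant_Atm (fl := fl) (dn := dn) hΓ
    fun b => ⟨_, .ax (hsub (.inr ⟨b, rfl⟩))⟩
  refine ⟨fun y => if ∃ ψ ∈ Δ, y ∈ FV ψ then .var (env y) else u y.1, ⟨hΓ, fun y => ?_,
    fun c => .ax (hsub (.inl (.inl (.inr ⟨_, c, rfl⟩))))⟩, fun ψ hψ => ?_⟩
  · split_ifs with hy
    exacts [.ax (hsub (.inl (.inl (.inl ⟨y.1, y.2, hy, rfl⟩)))), hu y.1]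
  · rw [tr_eq_trV]
    exact trV_congr fun y hy => if_pos ⟨ψ, hψ, hy⟩

end

/-- **Soundness of the embedding of PRED2₀ into I₀ (Theorem 5.3).**
If `Δ ⊢ φ` in PRED2₀ then `⟦Δ⟧ ∪ Γ(Δ ∪ {φ}) ⊢ ⟦φ⟧` in `I₀`.
(`env` is an injective assignment of illative variables to PRED2₀ variables, and
`yc` chooses, for each base type, a variable fresh for `Δ ∪ {φ}`.) -/
theorem embedding_sound {B : Type} [DecidableEq B] [Finite B]
    {Con : PRED2.Ty B → Type} [∀ τ : PRED2.Ty B, Countable (Con τ)]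
    (env : PRED2.Ty B × Nat → Nat) (henv : Function.Injective env)
    (Δ : Set (Trm B Con .o)) (φ : Trm B Con .o)
    (yc : B → Nat) (hyc : ∀ b : B, ∀ ψ ∈ insert φ Δ, (PRED2.Ty.base b, yc b) ∉ FV ψ)
    (hd : DerivFrom Δ φ) :
    IDerivFrom (((fun ψ : Trm B Con .o => tr env ψ) '' Δ) ∪ GammaSet env (insert φ Δ) yc)
      (tr env φ) := by
  obtain ⟨Δ₀, hΔ₀, hfin, hd⟩ := hd
  set Γ := ((fun ψ : Trm B Con .o => tr env ψ) '' Δ₀) ∪ GammaSet env (insert φ Δ₀) yc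
  have hΓ : (fvS Γ)ᶜ.Infinite := by
    rw [fvS_union]
    exact ((finite_fvS (hfin.image _)).union
      (finite_fvS_GammaSet env (hfin.insert φ) yc)).infinite_compl
  obtain ⟨ρ, hρ, hρtr⟩ :=
    exists_isTypingCtx_of_GammaSet_subset (fl := false) (dn := false) env yc hΓ
      Set.subset_union_right
  have hφ := hd.iDeriv_trV hρ fun ψ hψ => by
    rw [hρtr ψ (Set.mem_insert_of_mem φ hψ)]
    exact .ax (.inl ⟨ψ, hψ, rfl⟩)
  rw [hρtr φ (Set.mem_insert φ Δ₀)] at hφ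
  exact hφ.iDerivFrom (Set.union_subset_union (Set.image_mono hΔ₀)
    (GammaSet_mono env (Set.insert_subset_insert hΔ₀) yc))

end Embed
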